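/- arXiv:2311.00521 — 2 statements merged into one kernel-verified Lean document; each statement's English description precedes it below -/
import Mathlib

section
/- Let d ≥ 1, M > 0, τ ≥ σ ≥ 0, and let f : ℝ^d → ℝ be M-Lipschitz. Then for every x ∈ ℝ^d, |f_τ(x) − f_σ(x)| ≤ M·|τ − σ|·√(d/2). -/
/-!
Write `f_σ x = 𝔼 f (x + σ U)`, where `U` has density `π^(-d/2) e^(-‖u‖²)`. The Lipschitz
bound `|f (x + τ u) - f (x + σ u)| ≤ M |τ - σ| ‖u‖` gives `|f_τ x - f_σ x| ≤ M |τ - σ| 𝔼 ‖U‖`.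
In polar coordinates `𝔼 ‖U‖ = Γ((d + 1) / 2) / Γ(d / 2)`, and log-convexity of `Γ` between
`d / 2` and `d / 2 + 1` bounds this ratio by `√(d / 2)`.
-/

open MeasureTheory
open scoped Classical

/-- Gaussian smoothing of `f : ℝ^d → ℝ` with radius `σ`:
`f_σ(x) = π^(−d/2) ∫ f(x + σu) e^(−‖u‖²) du`, with `f_0 = f`. -/
noncomputable def gsmooth {d : ℕ} (f : EuclideanSpace ℝ (Fin d) → ℝ) (σ : ℝ)
    (x : EuclideanSpace ℝ (Fin d)) : ℝ :=
  if σ = 0 then f x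
  else Real.pi ^ (-(d : ℝ) / 2) *
    ∫ u : EuclideanSpace ℝ (Fin d), f (x + σ • u) * Real.exp (-‖u‖ ^ 2)

open Real Module
open scoped NNReal

lemma Real.Gamma_add_half_le {s : ℝ} (hs : 0 < s) : Gamma (s + 1 / 2) ≤ Gamma s * √s := by
  have hΓ := Gamma_pos_of_pos hs
  calc Gamma (s + 1 / 2) = Gamma (1 / 2 * s + 1 / 2 * (s + 1)) := by ring_nf
    _ ≤ Gamma s ^ (1 / 2 : ℝ) * Gamma (s + 1) ^ (1 / 2 : ℝ) :=
      Gamma_mul_add_mul_le_rpow_Gamma_mul_rpow_Gamma hs (by linarith) one_half_pos one_half_pos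
        (add_halves 1)
    _ = Gamma s * √s := by
      rw [Gamma_add_one hs.ne', mul_rpow hs.le hΓ.le, mul_comm (s ^ _), ← mul_assoc,
        ← rpow_add hΓ, add_halves, rpow_one, sqrt_eq_rpow]

lemma pow_sub_one_smul_mul_exp_neg_sq {n : ℕ} (hn : n ≠ 0) :
    (fun y : ℝ => y ^ (n - 1) • (y * rexp (-y ^ 2))) =
      fun y => y ^ (n : ℝ) * rexp (-y ^ (2 : ℝ)) := by
  ext y
  rw [smul_eq_mul, rpow_natCast, rpow_two, ← mul_assoc, ← pow_succ,
    Nat.sub_add_cancel (Nat.one_le_iff_ne_zero.2 hn)]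

lemma LipschitzWith.abs_sub_le {α : Type*} [PseudoMetricSpace α] {K : ℝ≥0} {f : α → ℝ}
    (hf : LipschitzWith K f) (a b : α) : |f a - f b| ≤ K * dist a b := by
  simpa only [Real.dist_eq] using hf.dist_le_mul a b

section GaussianWeight

variable {E : Type*} [NormedAddCommGroup E] [InnerProductSpace ℝ E] [FiniteDimensional ℝ E]
  [MeasurableSpace E] [BorelSpace E]

lemma integrable_exp_neg_sq_norm : Integrable fun u : E => rexp (-‖u‖ ^ 2) := by
  have := (GaussianFourier.integrable_cexp_neg_mul_sq_norm_add (V := E) (b := 1) (by simp) 0 0).norm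
  simpa [Complex.norm_exp, ← Complex.ofReal_pow] using this

lemma integral_exp_neg_sq_norm : ∫ u : E, rexp (-‖u‖ ^ 2) = π ^ ((finrank ℝ E : ℝ) / 2) := by
  simpa using GaussianFourier.integral_rexp_neg_mul_sq_norm (V := E) one_pos

variable [Nontrivial E]

lemma integrable_norm_mul_exp_neg_sq_norm : Integrable fun u : E => ‖u‖ * rexp (-‖u‖ ^ 2) := by
  have hn : (-1 : ℝ) < finrank ℝ E := by linarith [(Nat.cast_nonneg _ : (0 : ℝ) ≤ finrank ℝ E)]
  rw [integrable_fun_norm_addHaar volume (f := fun y => y * rexp (-y ^ 2)),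
    pow_sub_one_smul_mul_exp_neg_sq finrank_pos.ne']
  simpa using (integrable_rpow_mul_exp_neg_mul_sq one_pos hn).integrableOn

lemma integral_norm_mul_exp_neg_sq_norm :
    ∫ u : E, ‖u‖ * rexp (-‖u‖ ^ 2) =
      √π ^ finrank ℝ E * Gamma ((finrank ℝ E + 1) / 2) / Gamma (finrank ℝ E / 2) := by
  have hn : (0 : ℝ) < finrank ℝ E := by exact_mod_cast finrank_pos
  have hΓ := Gamma_pos_of_pos (by positivity : 0 < (finrank ℝ E : ℝ) / 2)
  rw [integral_fun_norm_addHaar volume (fun y => y * rexp (-y ^ 2)),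
    pow_sub_one_smul_mul_exp_neg_sq finrank_pos.ne',
    integral_rpow_mul_exp_neg_rpow two_pos (by linarith), measureReal_def,
    InnerProductSpace.volume_ball, ENNReal.toReal_mul, ENNReal.toReal_pow,
    ENNReal.toReal_ofReal zero_le_one, ENNReal.toReal_ofReal (by positivity),
    Gamma_add_one (by positivity)]
  simp only [nsmul_eq_mul, smul_eq_mul, one_pow]
  field_simp

lemma integral_norm_mul_exp_neg_sq_norm_le :
    ∫ u : E, ‖u‖ * rexp (-‖u‖ ^ 2) ≤ π ^ ((finrank ℝ E : ℝ) / 2) * √(finrank ℝ E / 2) := by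
  have hn : (0 : ℝ) < finrank ℝ E / 2 := by have : 0 < finrank ℝ E := finrank_pos; positivity
  have hΓ := Gamma_pos_of_pos hn
  have hπ : √π ^ finrank ℝ E = π ^ ((finrank ℝ E : ℝ) / 2) := by
    rw [sqrt_eq_rpow, ← rpow_natCast, ← rpow_mul pi_nonneg]
    ring_nf
  rw [integral_norm_mul_exp_neg_sq_norm, hπ, mul_div_assoc]
  gcongr
  rw [div_le_iff₀ hΓ, add_div, mul_comm]
  exact Gamma_add_half_le hn

lemma LipschitzWith.integrable_comp_add_smul_mul_exp_neg_sq_norm {f : E → ℝ} {K : ℝ≥0}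
    (hf : LipschitzWith K f) (x : E) (σ : ℝ) :
    Integrable fun u => f (x + σ • u) * rexp (-‖u‖ ^ 2) := by
  refine ((integrable_exp_neg_sq_norm.const_mul |f x|).add
    (integrable_norm_mul_exp_neg_sq_norm.const_mul (K * |σ|))).mono'
    ((hf.continuous.comp (by fun_prop)).mul (by fun_prop)).aestronglyMeasurable
    (.of_forall fun u => ?_)
  have hgrowth : |f (x + σ • u)| ≤ |f x| + K * |σ| * ‖u‖ := by
    have := hf.abs_sub_le (x + σ • u) x
    rw [dist_eq_norm, add_sub_cancel_left, norm_smul, Real.norm_eq_abs, ← mul_assoc] at this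
    linarith [abs_sub_abs_le_abs_sub (f (x + σ • u)) (f x)]
  rw [Real.norm_eq_abs, abs_mul, abs_of_pos (exp_pos _)]
  calc |f (x + σ • u)| * rexp (-‖u‖ ^ 2) ≤ (|f x| + K * |σ| * ‖u‖) * rexp (-‖u‖ ^ 2) := by
        gcongr
    _ = _ := by simp only [Pi.add_apply]; ring

lemma LipschitzWith.abs_integral_comp_add_smul_sub_le {f : E → ℝ} {K : ℝ≥0}
    (hf : LipschitzWith K f) (x : E) (σ τ : ℝ) :
    |(∫ u, f (x + τ • u) * rexp (-‖u‖ ^ 2)) - ∫ u, f (x + σ • u) * rexp (-‖u‖ ^ 2)| ≤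
      K * |τ - σ| * ∫ u : E, ‖u‖ * rexp (-‖u‖ ^ 2) := by
  have hτ := hf.integrable_comp_add_smul_mul_exp_neg_sq_norm x τ
  have hσ := hf.integrable_comp_add_smul_mul_exp_neg_sq_norm x σ
  rw [← integral_sub hτ hσ, ← integral_const_mul]
  refine abs_integral_le_integral_abs.trans <| integral_mono (hτ.sub hσ).abs
    (integrable_norm_mul_exp_neg_sq_norm.const_mul _) fun u => ?_
  have hdiff : |f (x + τ • u) - f (x + σ • u)| ≤ K * (|τ - σ| * ‖u‖) := by
    simpa [dist_eq_norm, ← sub_smul, norm_smul] using hf.abs_sub_le (x + τ • u) (x + σ • u)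
  calc |f (x + τ • u) * rexp (-‖u‖ ^ 2) - f (x + σ • u) * rexp (-‖u‖ ^ 2)|
      = |f (x + τ • u) - f (x + σ • u)| * rexp (-‖u‖ ^ 2) := by
        rw [← sub_mul, abs_mul, abs_of_pos (exp_pos _)]
    _ ≤ K * (|τ - σ| * ‖u‖) * rexp (-‖u‖ ^ 2) := by gcongr
    _ = _ := by ring

end GaussianWeight

lemma gsmooth_eq_integral {d : ℕ} (f : EuclideanSpace ℝ (Fin d) → ℝ) (σ : ℝ)
    (x : EuclideanSpace ℝ (Fin d)) :
    gsmooth f σ x = π ^ (-(d : ℝ) / 2) * ∫ u, f (x + σ • u) * rexp (-‖u‖ ^ 2) := by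
  rcases eq_or_ne σ 0 with rfl | hσ
  · rw [gsmooth, if_pos rfl]
    simp only [zero_smul, add_zero]
    rw [integral_const_mul, integral_exp_neg_sq_norm, finrank_euclideanSpace_fin, mul_left_comm,
      ← rpow_add pi_pos, neg_div, neg_add_cancel, rpow_zero, mul_one]
  · exact if_neg hσ

theorem gsmooth_diff_bound_lipschitz_general {d : ℕ} (hd : 1 ≤ d) {M σ τ : ℝ} (hM : 0 < M)
    (f : EuclideanSpace ℝ (Fin d) → ℝ)
    (hlip : ∀ x y, |f x - f y| ≤ M * ‖x - y‖) :
    ∀ x, |gsmooth f τ x - gsmooth f σ x| ≤ M * |τ - σ| * Real.sqrt (d / 2) := by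
  intro x
  have : Nontrivial (EuclideanSpace ℝ (Fin d)) :=
    Module.nontrivial_of_finrank_pos (R := ℝ) (by rwa [finrank_euclideanSpace_fin])
  have hf : LipschitzWith M.toNNReal f :=
    .of_dist_le' fun a b => by rw [Real.dist_eq, dist_eq_norm]; exact hlip a b
  have hπ : 0 < π ^ (-(d : ℝ) / 2) := rpow_pos_of_pos pi_pos _
  calc |gsmooth f τ x - gsmooth f σ x|
      = π ^ (-(d : ℝ) / 2) *
          |(∫ u, f (x + τ • u) * rexp (-‖u‖ ^ 2)) - ∫ u, f (x + σ • u) * rexp (-‖u‖ ^ 2)| := by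
        rw [gsmooth_eq_integral, gsmooth_eq_integral, ← mul_sub, abs_mul, abs_of_pos hπ]
    _ ≤ π ^ (-(d : ℝ) / 2) * (M * |τ - σ| * (π ^ ((d : ℝ) / 2) * √(d / 2))) := by
        gcongr
        refine (hf.abs_integral_comp_add_smul_sub_le x σ τ).trans ?_
        rw [Real.coe_toNNReal M hM.le]
        gcongr
        simpa using integral_norm_mul_exp_neg_sq_norm_le (E := EuclideanSpace ℝ (Fin d))
    _ = M * |τ - σ| * √(d / 2) := by
        rw [mul_left_comm, ← mul_assoc (π ^ _), mul_left_comm, ← rpow_add pi_pos, neg_div,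
          neg_add_cancel, rpow_zero, one_mul]

/-- For `f` `M`-Lipschitz and `τ ≥ σ ≥ 0`,
`|f_τ(x) − f_σ(x)| ≤ M|τ − σ|√(d/2)`. -/
theorem gsmooth_diff_bound_lipschitz {d : ℕ} (hd : 1 ≤ d) {M σ τ : ℝ} (hM : 0 < M)
    (hσ : 0 ≤ σ) (hστ : σ ≤ τ)
    (f : EuclideanSpace ℝ (Fin d) → ℝ)
    (hlip : ∀ x y, |f x - f y| ≤ M * ‖x - y‖) :
    ∀ x, |gsmooth f τ x - gsmooth f σ x| ≤ M * |τ - σ| * Real.sqrt (d / 2) :=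
  gsmooth_diff_bound_lipschitz_general hd hM f hlip
end

section
/- Let d ≥ 1, L > 0, σ ≥ 0, and let f : ℝ^d → ℝ be L-smooth. Suppose f attains its minimum at x⋆ and f_σ attains its minimum at x⋆_σ. Then 0 ≤ f_σ(x⋆_σ) − f(x⋆) ≤ σ²Ld/4. -/
open MeasureTheory
open scoped Classical

/-!
The descent lemma for an `L`-smooth `f` with minimiser `x⋆` gives the sandwich
`f x⋆ ≤ f y ≤ f x⋆ + (L/2) ‖y - x⋆‖²`. Averaging it against the Gaussian weight gives
`f x⋆ ≤ f_σ(x⋆_σ)` and `f_σ(x⋆_σ) ≤ f_σ(x⋆) ≤ f x⋆ + (L/2) σ² E‖u‖²`, where the second moment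
`E‖u‖² = d/2` of the weight `π^(-d/2) e^(-‖u‖²)` comes from polar coordinates and
`Γ(s + 1) = s Γ(s)`.
-/

open Real Set

theorem integral_pow_add_two_mul_exp_neg_sq (k : ℕ) :
    ∫ y in Ioi (0 : ℝ), y ^ (k + 2) * exp (-y ^ 2) =
      (k + 1) / 2 * ∫ y in Ioi (0 : ℝ), y ^ k * exp (-y ^ 2) := by
  have h (n : ℕ) : ∫ y in Ioi (0 : ℝ), y ^ n * exp (-y ^ 2) = 1 / 2 * Gamma ((n + 1) / 2) := by
    rw [← integral_rpow_mul_exp_neg_rpow two_pos (by linarith [n.cast_nonneg (α := ℝ)])]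
    refine setIntegral_congr_fun measurableSet_Ioi fun y _ => ?_
    norm_cast
  rw [h, h, show ((k + 2 : ℕ) + 1 : ℝ) / 2 = (k + 1) / 2 + 1 by push_cast; ring,
    Gamma_add_one (by positivity)]
  ring

theorem integral_norm_sq_mul_exp_neg_norm_sq {E : Type*} [NormedAddCommGroup E]
    [NormedSpace ℝ E] [FiniteDimensional ℝ E] [MeasurableSpace E] [BorelSpace E]
    (μ : Measure E) [μ.IsAddHaarMeasure] :
    ∫ x, ‖x‖ ^ 2 * exp (-‖x‖ ^ 2) ∂μ = Module.finrank ℝ E / 2 * ∫ x, exp (-‖x‖ ^ 2) ∂μ := by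
  cases subsingleton_or_nontrivial E
  · simp [Module.finrank_zero_of_subsingleton, Subsingleton.elim _ (0 : E)]
  obtain ⟨k, hk⟩ := Nat.exists_eq_add_one_of_ne_zero (Module.finrank_pos (R := ℝ) (M := E)).ne'
  rw [integral_fun_norm_addHaar μ (fun t => t ^ 2 * exp (-t ^ 2)),
    integral_fun_norm_addHaar μ (fun t => exp (-t ^ 2)), hk, Nat.add_sub_cancel]
  simp only [smul_eq_mul, ← mul_assoc, ← pow_add, integral_pow_add_two_mul_exp_neg_sq]
  push_cast
  ring

section GaussianWeight

variable {V : Type*} [NormedAddCommGroup V] [InnerProductSpace ℝ V] [FiniteDimensional ℝ V]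
  [MeasurableSpace V] [BorelSpace V]

theorem integral_exp_neg_norm_sq :
    ∫ v : V, exp (-‖v‖ ^ 2) = π ^ (Module.finrank ℝ V / 2 : ℝ) := by
  simpa using GaussianFourier.integral_rexp_neg_mul_sq_norm (V := V) one_pos

theorem integrable_exp_neg_mul_norm_sq {b : ℝ} (hb : 0 < b) :
    Integrable fun v : V => exp (-b * ‖v‖ ^ 2) := by
  refine Integrable.of_integral_ne_zero ?_
  rw [GaussianFourier.integral_rexp_neg_mul_sq_norm hb]
  exact (rpow_pos_of_pos (div_pos pi_pos hb) _).ne'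

theorem integrable_exp_neg_norm_sq : Integrable fun v : V => exp (-‖v‖ ^ 2) := by
  simpa using integrable_exp_neg_mul_norm_sq (V := V) one_pos

theorem integrable_norm_sq_mul_exp_neg_norm_sq :
    Integrable fun v : V => ‖v‖ ^ 2 * exp (-‖v‖ ^ 2) := by
  refine ((integrable_exp_neg_mul_norm_sq (V := V) one_half_pos).const_mul 2).mono'
    (by fun_prop) (.of_forall fun v => ?_)
  have hle : ‖v‖ ^ 2 ≤ 2 * exp (‖v‖ ^ 2 / 2) := by
    linarith [add_one_le_exp (‖v‖ ^ 2 / 2), sq_nonneg ‖v‖]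
  rw [norm_of_nonneg (by positivity)]
  calc ‖v‖ ^ 2 * exp (-‖v‖ ^ 2) ≤ 2 * exp (‖v‖ ^ 2 / 2) * exp (-‖v‖ ^ 2) := by gcongr
    _ = 2 * exp (-(1 / 2) * ‖v‖ ^ 2) := by rw [mul_assoc, ← exp_add]; ring_nf

theorem integrable_quadratic_mul_exp_neg_norm_sq (a b : ℝ) :
    Integrable fun v : V => (a + b * ‖v‖ ^ 2) * exp (-‖v‖ ^ 2) := by
  simp only [add_mul, mul_assoc]
  exact (integrable_exp_neg_norm_sq.const_mul a).add
    (integrable_norm_sq_mul_exp_neg_norm_sq.const_mul b)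

theorem integral_quadratic_mul_exp_neg_norm_sq (a b : ℝ) :
    ∫ v : V, (a + b * ‖v‖ ^ 2) * exp (-‖v‖ ^ 2) =
      (a + b * (Module.finrank ℝ V / 2)) * π ^ (Module.finrank ℝ V / 2 : ℝ) := by
  simp only [add_mul, mul_assoc]
  rw [integral_add (integrable_exp_neg_norm_sq.const_mul a)
      (integrable_norm_sq_mul_exp_neg_norm_sq.const_mul b), integral_const_mul, integral_const_mul,
    integral_norm_sq_mul_exp_neg_norm_sq, integral_exp_neg_norm_sq]

theorem integrable_comp_add_smul_mul_exp_neg_norm_sq {f : V → ℝ} (hf : Continuous f)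
    {A B : ℝ} {c : V} (hB : 0 ≤ B) (hbound : ∀ y, |f y| ≤ A + B * ‖y - c‖ ^ 2) (x : V) (σ : ℝ) :
    Integrable fun u => f (x + σ • u) * exp (-‖u‖ ^ 2) := by
  refine (integrable_quadratic_mul_exp_neg_norm_sq (A + 2 * B * ‖x - c‖ ^ 2) (2 * B * σ ^ 2)).mono'
    (by fun_prop) (.of_forall fun u => ?_)
  rw [norm_mul, norm_of_nonneg (exp_pos _).le, norm_eq_abs]
  gcongr
  calc |f (x + σ • u)| ≤ A + B * ‖(x - c) + σ • u‖ ^ 2 := by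
        simpa [sub_add_eq_add_sub] using hbound (x + σ • u)
    _ ≤ A + B * (2 * (‖x - c‖ ^ 2 + ‖σ • u‖ ^ 2)) := by
        gcongr
        exact (pow_le_pow_left₀ (norm_nonneg _) (norm_add_le _ _) 2).trans add_sq_le
    _ = A + 2 * B * ‖x - c‖ ^ 2 + 2 * B * σ ^ 2 * ‖u‖ ^ 2 := by
        rw [norm_smul, mul_pow, norm_eq_abs, sq_abs]
        ring

end GaussianWeight

theorem le_add_inner_gradient_add_of_lipschitz_gradient {E : Type*} [NormedAddCommGroup E]
    [InnerProductSpace ℝ E] [CompleteSpace E] {f : E → ℝ} {L : ℝ} (hf : Differentiable ℝ f)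
    (hgrad : ∀ x y, ‖gradient f x - gradient f y‖ ≤ L * ‖x - y‖) (x y : E) :
    f y ≤ f x + inner ℝ (gradient f x) (y - x) + L / 2 * ‖y - x‖ ^ 2 := by
  set v := y - x
  let g : ℝ → ℝ := fun t =>
    f (x + t • v) - t * inner ℝ (gradient f x) v - L / 2 * t ^ 2 * ‖v‖ ^ 2
  have hg (t : ℝ) : HasDerivAt g
      (inner ℝ (gradient f (x + t • v) - gradient f x) v - L * t * ‖v‖ ^ 2) t := by
    have hline : HasDerivAt (fun s : ℝ => f (x + s • v))
        (inner ℝ (gradient f (x + t • v)) v) t := by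
      simpa [Function.comp_def] using (hf _).hasGradientAt.hasFDerivAt.comp_hasDerivAt t
        (((hasDerivAt_id t).smul_const v).const_add x)
    refine ((hline.sub (hasDerivAt_mul_const _)).sub
      (((hasDerivAt_pow 2 t).const_mul (L / 2)).mul_const (‖v‖ ^ 2))).congr_deriv ?_
    rw [inner_sub_left]
    ring
  have hanti : AntitoneOn g (Ici 0) := by
    refine antitoneOn_of_deriv_nonpos (convex_Ici 0)
      (fun t _ => (hg t).continuousAt.continuousWithinAt)
      (fun t _ => (hg t).differentiableAt.differentiableWithinAt) fun t ht => ?_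
    rw [interior_Ici, mem_Ioi] at ht
    rw [(hg t).deriv, sub_nonpos]
    calc inner ℝ (gradient f (x + t • v) - gradient f x) v
        ≤ ‖gradient f (x + t • v) - gradient f x‖ * ‖v‖ := real_inner_le_norm _ _
      _ ≤ L * ‖t • v‖ * ‖v‖ := by
          gcongr
          simpa using hgrad (x + t • v) x
      _ = L * t * ‖v‖ ^ 2 := by rw [norm_smul, norm_of_nonneg ht.le]; ring
  have h01 := hanti (mem_Ici.2 le_rfl) (mem_Ici.2 zero_le_one) zero_le_one
  norm_num [g, show x + v = y from add_sub_cancel x y] at h01 ⊢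
  linarith

section GaussianSmoothing

variable {d : ℕ} {f : EuclideanSpace ℝ (Fin d) → ℝ} {σ : ℝ} {x : EuclideanSpace ℝ (Fin d)}

theorem gsmooth_of_ne_zero (hσ : σ ≠ 0) :
    gsmooth f σ x = (∫ u, f (x + σ • u) * exp (-‖u‖ ^ 2)) / π ^ ((d : ℝ) / 2) := by
  rw [gsmooth, if_neg hσ, neg_div, rpow_neg pi_pos.le, inv_mul_eq_div]

theorem le_gsmooth_of_forall_le {m : ℝ}
    (hint : Integrable fun u => f (x + σ • u) * exp (-‖u‖ ^ 2)) (hm : ∀ y, m ≤ f y) :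
    m ≤ gsmooth f σ x := by
  rcases eq_or_ne σ 0 with rfl | hσ
  · simpa [gsmooth] using hm x
  rw [gsmooth_of_ne_zero hσ, le_div_iff₀ (by positivity)]
  calc m * π ^ ((d : ℝ) / 2) = ∫ u : EuclideanSpace ℝ (Fin d), m * exp (-‖u‖ ^ 2) := by
        rw [integral_const_mul, integral_exp_neg_norm_sq, finrank_euclideanSpace_fin]
    _ ≤ _ := integral_mono (integrable_exp_neg_norm_sq.const_mul m) hint fun u => by
        gcongr
        exact hm _

theorem gsmooth_le_of_forall_le_add_sq {a b : ℝ}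
    (hint : Integrable fun u => f (x + σ • u) * exp (-‖u‖ ^ 2))
    (hf : ∀ y, f y ≤ a + b * ‖y - x‖ ^ 2) :
    gsmooth f σ x ≤ a + b * σ ^ 2 * d / 2 := by
  rcases eq_or_ne σ 0 with rfl | hσ
  · simpa [gsmooth] using hf x
  rw [gsmooth_of_ne_zero hσ, div_le_iff₀ (by positivity)]
  calc ∫ u, f (x + σ • u) * exp (-‖u‖ ^ 2)
      ≤ ∫ u : EuclideanSpace ℝ (Fin d), (a + b * σ ^ 2 * ‖u‖ ^ 2) * exp (-‖u‖ ^ 2) :=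
        integral_mono hint (integrable_quadratic_mul_exp_neg_norm_sq _ _) fun u => by
          gcongr
          simpa [norm_smul, mul_pow, mul_assoc] using hf (x + σ • u)
    _ = _ := by
        rw [integral_quadratic_mul_exp_neg_norm_sq, finrank_euclideanSpace_fin]
        ring

end GaussianSmoothing

theorem gsmooth_min_bound_lsmooth_general {d : ℕ} {L σ : ℝ}
    (f : EuclideanSpace ℝ (Fin d) → ℝ)
    (hdiff : Differentiable ℝ f)
    (hgrad : ∀ x y, ‖gradient f x - gradient f y‖ ≤ L * ‖x - y‖)
    (xstar xsig : EuclideanSpace ℝ (Fin d))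
    (hmin : ∀ y, f xstar ≤ f y)
    (hminsig : ∀ y, gsmooth f σ xsig ≤ gsmooth f σ y) :
    0 ≤ gsmooth f σ xsig - f xstar ∧ gsmooth f σ xsig - f xstar ≤ σ ^ 2 * L * d / 4 := by
  have hcrit : gradient f xstar = 0 := by
    have hloc : IsLocalMin f xstar := .of_forall hmin
    rw [gradient, hloc.fderiv_eq_zero, map_zero]
  have hquad (y) : f y ≤ f xstar + L / 2 * ‖y - xstar‖ ^ 2 := by
    simpa [hcrit] using le_add_inner_gradient_add_of_lipschitz_gradient hdiff hgrad xstar y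
  have hgrowth (y) : |f y| ≤ |f xstar| + |L| / 2 * ‖y - xstar‖ ^ 2 := by
    have hL : L / 2 * ‖y - xstar‖ ^ 2 ≤ |L| / 2 * ‖y - xstar‖ ^ 2 := by
      gcongr
      exact le_abs_self L
    have hnonneg : 0 ≤ |L| / 2 * ‖y - xstar‖ ^ 2 := by positivity
    rw [abs_le]
    constructor <;> linarith [neg_abs_le (f xstar), le_abs_self (f xstar), hmin y, hquad y]
  have hint := integrable_comp_add_smul_mul_exp_neg_norm_sq hdiff.continuous
    (by positivity) hgrowth
  have hlower := le_gsmooth_of_forall_le (hint xsig σ) hmin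
  have hupper := gsmooth_le_of_forall_le_add_sq (hint xstar σ) hquad
  constructor <;> linarith [hminsig xstar]

/-- For `f` `L`-smooth with minimizer `x⋆` of `f` and minimizer `x⋆_σ` of `f_σ`,
`0 ≤ f_σ(x⋆_σ) − f(x⋆) ≤ σ²Ld/4`. -/
theorem gsmooth_min_bound_lsmooth {d : ℕ} (hd : 1 ≤ d) {L σ : ℝ} (hL : 0 < L) (hσ : 0 ≤ σ)
    (f : EuclideanSpace ℝ (Fin d) → ℝ)
    (hdiff : Differentiable ℝ f)
    (hgrad : ∀ x y, ‖gradient f x - gradient f y‖ ≤ L * ‖x - y‖)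
    (xstar xsig : EuclideanSpace ℝ (Fin d))
    (hmin : ∀ y, f xstar ≤ f y)
    (hminsig : ∀ y, gsmooth f σ xsig ≤ gsmooth f σ y) :
    0 ≤ gsmooth f σ xsig - f xstar ∧ gsmooth f σ xsig - f xstar ≤ σ ^ 2 * L * d / 4 :=
  gsmooth_min_bound_lsmooth_general f hdiff hgrad xstar xsig hmin hminsig
end
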